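/- For any real matrix X of size n×p, the nuclear norm of X equals the minimum of ‖A‖_F · ‖B‖_F over all factorizations X = AB. -/

import Mathlib

open Matrix BigOperators

/-- Frobenius norm of a real matrix. -/
noncomputable def frobNorm {m n : Type*} [Fintype m] [Fintype n]
    (X : Matrix m n ℝ) : ℝ :=
  Real.sqrt (∑ i, ∑ j, (X i j) ^ 2)

/-- Nuclear norm: sum of singular values, i.e. the sum of the square roots of
the eigenvalues of `Xᴴ * X`. -/
noncomputable def nuclearNorm {m n : Type*} [Fintype m] [Fintype n] [DecidableEq n]
    (X : Matrix m n ℝ) : ℝ :=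
  ∑ i, Real.sqrt ((Matrix.isHermitian_conjTranspose_mul_self X).eigenvalues i)

/-!
Let `V` be an orthogonal matrix diagonalising `XᵀX`. The columns of `Y = XV` are then
orthogonal, with squared lengths the eigenvalues `λⱼ`, and `‖X‖_* = ∑ √λⱼ`. Scaling column `j`
of `Y` by `λⱼ^(-1/4)` and row `j` of `Vᵀ` by `λⱼ^(1/4)` gives a factorization `X = AB` with
`‖A‖_F² = ‖B‖_F² = ∑ √λⱼ`. Conversely, let `U` be `Y` with normalised columns (zero columns
stay zero), a partial isometry. For any `X = AB`, Cauchy–Schwarz, Bessel's inequality and the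
orthogonal invariance of `‖·‖_F` give `∑ √λⱼ = tr (UᵀA · BV) ≤ ‖UᵀA‖_F ‖BV‖_F ≤ ‖A‖_F ‖B‖_F`.
-/

section frobNorm

variable {l m n : Type*} [Fintype l] [Fintype m] [Fintype n]

lemma frobNorm_nonneg (M : Matrix m n ℝ) : 0 ≤ frobNorm M :=
  Real.sqrt_nonneg _

lemma frobNorm_sq (M : Matrix m n ℝ) : frobNorm M ^ 2 = (Mᴴ * M).trace := by
  rw [frobNorm, Real.sq_sqrt (by positivity), Finset.sum_comm]
  simp [Matrix.trace, Matrix.mul_apply, sq]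

lemma frobNorm_conjTranspose (M : Matrix m n ℝ) : frobNorm Mᴴ = frobNorm M := by
  rw [frobNorm, frobNorm, Finset.sum_comm]
  simp

lemma frobNorm_eq_sqrt_trace (M : Matrix m n ℝ) : frobNorm M = √((Mᴴ * M).trace) := by
  rw [← frobNorm_sq, Real.sqrt_sq (frobNorm_nonneg M)]

lemma trace_mul_le_frobNorm_mul_frobNorm (P : Matrix m n ℝ) (Q : Matrix n m ℝ) :
    (P * Q).trace ≤ frobNorm P * frobNorm Q := by
  have h := Real.sum_mul_le_sqrt_mul_sqrt Finset.univ (fun x : m × n => P x.1 x.2)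
    (fun x => Qᴴ x.1 x.2)
  simp only [Fintype.sum_prod_type] at h
  rw [← frobNorm_conjTranspose Q]
  simpa [Matrix.trace, Matrix.mul_apply, frobNorm] using h

lemma frobNorm_mul_of_mul_conjTranspose_eq_one [DecidableEq n] {V : Matrix n n ℝ}
    (hV : V * Vᴴ = 1) (B : Matrix l n ℝ) : frobNorm (B * V) = frobNorm B := by
  rw [← frobNorm_conjTranspose, ← frobNorm_conjTranspose B, frobNorm_eq_sqrt_trace,
    frobNorm_eq_sqrt_trace, conjTranspose_conjTranspose, conjTranspose_conjTranspose,
    conjTranspose_mul, Matrix.mul_assoc, ← Matrix.mul_assoc V, hV, Matrix.one_mul]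

lemma frobNorm_conjTranspose_mul_le {U : Matrix m n ℝ} (hU : U * Uᴴ * U = U)
    (A : Matrix m l ℝ) : frobNorm (Uᴴ * A) ≤ frobNorm A := by
  classical
  set P := U * Uᴴ
  have hP : (1 - P)ᴴ * (1 - P) = 1 - P := by
    simp only [P, conjTranspose_sub, conjTranspose_one, conjTranspose_mul,
      conjTranspose_conjTranspose, Matrix.sub_mul, Matrix.mul_sub, Matrix.one_mul,
      Matrix.mul_one, ← Matrix.mul_assoc, hU]
    abel
  have hsq : frobNorm A ^ 2 = frobNorm (Uᴴ * A) ^ 2 + frobNorm ((1 - P) * A) ^ 2 := by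
    simp only [frobNorm_sq, ← trace_add, conjTranspose_mul, conjTranspose_conjTranspose,
      Matrix.mul_assoc, ← Matrix.mul_assoc (1 - P)ᴴ, hP]
    simp only [P, Matrix.sub_mul, Matrix.mul_sub, Matrix.one_mul, Matrix.mul_assoc]
    abel_nf
  refine le_of_pow_le_pow_left₀ two_ne_zero (frobNorm_nonneg A) ?_
  rw [hsq]
  exact le_add_of_nonneg_right (sq_nonneg _)

end frobNorm

section orthogonalColumns

variable {l m n : Type*} [Fintype m] [DecidableEq n] {Y : Matrix m n ℝ} {d : n → ℝ}

lemma sum_sq_eq_of_conjTranspose_mul_self_eq_diagonal (hY : Yᴴ * Y = diagonal d) (j : n) :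
    ∑ i, Y i j ^ 2 = d j := by
  simpa [Matrix.mul_apply, sq] using congrFun (congrFun hY j) j

lemma nonneg_of_conjTranspose_mul_self_eq_diagonal (hY : Yᴴ * Y = diagonal d) (j : n) :
    0 ≤ d j := by
  rw [← sum_sq_eq_of_conjTranspose_mul_self_eq_diagonal hY j]
  positivity

variable [Fintype l] [Fintype n]

lemma mul_diagonal_eq_self_of_conjTranspose_mul_self_eq_diagonal (hY : Yᴴ * Y = diagonal d)
    {w : n → ℝ} (hw : ∀ j, d j ≠ 0 → w j = 1) : Y * diagonal w = Y := by
  ext i j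
  rw [mul_diagonal]
  by_cases hj : d j = 0
  · have hcol := sum_sq_eq_of_conjTranspose_mul_self_eq_diagonal hY j
    rw [hj, Finset.sum_eq_zero_iff_of_nonneg fun k _ => sq_nonneg (Y k j)] at hcol
    rw [pow_eq_zero_iff two_ne_zero |>.mp (hcol i (Finset.mem_univ i)), zero_mul]
  · rw [hw j hj, mul_one]

lemma frobNorm_mul_diagonal_sq (hY : Yᴴ * Y = diagonal d) (w : n → ℝ) :
    frobNorm (Y * diagonal w) ^ 2 = ∑ j, w j ^ 2 * d j := by
  rw [frobNorm_sq, conjTranspose_mul, diagonal_conjTranspose, Matrix.mul_assoc,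
    ← Matrix.mul_assoc Yᴴ, hY, diagonal_mul_diagonal, diagonal_mul_diagonal, trace_diagonal]
  simp only [Pi.star_apply, star_trivial, sq]
  exact Finset.sum_congr rfl fun j _ => by ring

lemma sum_sqrt_le_frobNorm_mul_frobNorm (hY : Yᴴ * Y = diagonal d) {A : Matrix m l ℝ}
    {C : Matrix l n ℝ} (hAC : Y = A * C) : ∑ j, √(d j) ≤ frobNorm A * frobNorm C := by
  set U := Y * diagonal fun j => (√(d j))⁻¹
  have hUY : Uᴴ * Y = diagonal fun j => √(d j) := by
    rw [conjTranspose_mul, diagonal_conjTranspose, Matrix.mul_assoc, hY, diagonal_mul_diagonal]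
    simp [inv_mul_eq_div, Real.div_sqrt]
  have hUU : Uᴴ * U = diagonal fun j => √(d j) * (√(d j))⁻¹ := by
    rw [← Matrix.mul_assoc, hUY, diagonal_mul_diagonal]
  have hU : U * Uᴴ * U = U := by
    rw [Matrix.mul_assoc, hUU]
    exact mul_diagonal_eq_self_of_conjTranspose_mul_self_eq_diagonal hUU
      fun j hj => mul_inv_cancel₀ (left_ne_zero_of_mul hj)
  calc ∑ j, √(d j) = (Uᴴ * A * C).trace := by
        rw [Matrix.mul_assoc, ← hAC, hUY, trace_diagonal]
    _ ≤ frobNorm (Uᴴ * A) * frobNorm C := trace_mul_le_frobNorm_mul_frobNorm _ _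
    _ ≤ frobNorm A * frobNorm C := by
      gcongr
      · exact frobNorm_nonneg C
      · exact frobNorm_conjTranspose_mul_le hU A

variable {X : Matrix m n ℝ} {V : Matrix n n ℝ}

lemma sum_sqrt_le_frobNorm_mul_frobNorm_of_mul_eq (hV : V * Vᴴ = 1)
    (hXV : (X * V)ᴴ * (X * V) = diagonal d) {A : Matrix m l ℝ} {B : Matrix l n ℝ}
    (hAB : X = A * B) : ∑ j, √(d j) ≤ frobNorm A * frobNorm B := by
  rw [← frobNorm_mul_of_mul_conjTranspose_eq_one hV B]
  exact sum_sqrt_le_frobNorm_mul_frobNorm hXV (by rw [hAB, Matrix.mul_assoc])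

lemma exists_mul_eq_and_frobNorm_mul_frobNorm_eq_sum_sqrt (hV : V * Vᴴ = 1) (hV' : Vᴴ * V = 1)
    (hXV : (X * V)ᴴ * (X * V) = diagonal d) :
    ∃ (A : Matrix m n ℝ) (B : Matrix n n ℝ),
      X = A * B ∧ frobNorm A * frobNorm B = ∑ j, √(d j) := by
  set s : n → ℝ := fun j => √√(d j)
  refine ⟨X * V * diagonal s⁻¹, diagonal s * Vᴴ, ?_, ?_⟩
  · have hs (j : n) (hj : d j ≠ 0) : s⁻¹ j * s j = 1 := by
      have hd := (nonneg_of_conjTranspose_mul_self_eq_diagonal hXV j).lt_of_ne' hj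
      exact inv_mul_cancel₀ (Real.sqrt_pos.2 (Real.sqrt_pos.2 hd)).ne'
    rw [← Matrix.mul_assoc, Matrix.mul_assoc (X * V), diagonal_mul_diagonal,
      mul_diagonal_eq_self_of_conjTranspose_mul_self_eq_diagonal hXV hs, Matrix.mul_assoc, hV,
      Matrix.mul_one]
  · have hA : frobNorm (X * V * diagonal s⁻¹) ^ 2 = ∑ j, √(d j) := by
      rw [frobNorm_mul_diagonal_sq hXV]
      refine Finset.sum_congr rfl fun j _ => ?_
      simp [s, inv_pow, Real.sq_sqrt (Real.sqrt_nonneg _), inv_mul_eq_div, Real.div_sqrt]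
    have hB : frobNorm (diagonal s * Vᴴ) ^ 2 = ∑ j, √(d j) := by
      rw [← frobNorm_conjTranspose, conjTranspose_mul, conjTranspose_conjTranspose,
        diagonal_conjTranspose, frobNorm_mul_diagonal_sq (d := 1) (hV'.trans diagonal_one.symm)]
      refine Finset.sum_congr rfl fun j _ => ?_
      simp [s, Real.sq_sqrt (Real.sqrt_nonneg _)]
    rw [← Real.sqrt_sq (frobNorm_nonneg (X * V * _)),
      ← Real.sqrt_sq (frobNorm_nonneg (_ * Vᴴ)), hA, hB,
      Real.mul_self_sqrt (Finset.sum_nonneg fun _ _ => Real.sqrt_nonneg _)]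

end orthogonalColumns

lemma Matrix.IsHermitian.conjTranspose_eigenvectorUnitary_mul_mul_eigenvectorUnitary
    {n : Type*} [Fintype n] [DecidableEq n] {H : Matrix n n ℝ} (hH : H.IsHermitian) :
    (hH.eigenvectorUnitary : Matrix n n ℝ)ᴴ * H * hH.eigenvectorUnitary =
      diagonal hH.eigenvalues := by
  simpa [Unitary.conjStarAlgAut_apply, star_eq_conjTranspose] using
    hH.conjStarAlgAut_star_eigenvectorUnitary

section nuclearNorm

variable {l m n : Type*} [Fintype l] [Fintype m] [Fintype n] [DecidableEq n] (X : Matrix m n ℝ)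

lemma mul_eigenvectorUnitary_conjTranspose_mul_self (hX : (Xᴴ * X).IsHermitian) :
    (X * (hX.eigenvectorUnitary : Matrix n n ℝ))ᴴ * (X * (hX.eigenvectorUnitary : Matrix n n ℝ))
      = diagonal hX.eigenvalues := by
  rw [conjTranspose_mul, Matrix.mul_assoc, ← Matrix.mul_assoc Xᴴ, ← Matrix.mul_assoc,
    hX.conjTranspose_eigenvectorUnitary_mul_mul_eigenvectorUnitary]

lemma nuclearNorm_le_frobNorm_mul_frobNorm {A : Matrix m l ℝ} {B : Matrix l n ℝ}
    (hAB : X = A * B) : nuclearNorm X ≤ frobNorm A * frobNorm B :=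
  let hX := isHermitian_conjTranspose_mul_self X
  sum_sqrt_le_frobNorm_mul_frobNorm_of_mul_eq
    (Unitary.mul_star_self_of_mem hX.eigenvectorUnitary.2)
    (mul_eigenvectorUnitary_conjTranspose_mul_self X hX) hAB

lemma exists_mul_eq_and_frobNorm_mul_frobNorm_eq_nuclearNorm :
    ∃ (A : Matrix m n ℝ) (B : Matrix n n ℝ),
      X = A * B ∧ frobNorm A * frobNorm B = nuclearNorm X :=
  let hX := isHermitian_conjTranspose_mul_self X
  exists_mul_eq_and_frobNorm_mul_frobNorm_eq_sum_sqrt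
    (Unitary.mul_star_self_of_mem hX.eigenvectorUnitary.2)
    (Unitary.star_mul_self_of_mem hX.eigenvectorUnitary.2)
    (mul_eigenvectorUnitary_conjTranspose_mul_self X hX)

end nuclearNorm

/-- the nuclear norm of `X` is the minimum of `‖A‖_F * ‖B‖_F`
over all factorizations `X = A * B`. -/
theorem nuclearNorm_isLeast_factorization (n p : ℕ) (X : Matrix (Fin n) (Fin p) ℝ) :
    IsLeast {c : ℝ | ∃ (k : ℕ) (A : Matrix (Fin n) (Fin k) ℝ) (B : Matrix (Fin k) (Fin p) ℝ),
        X = A * B ∧ c = frobNorm A * frobNorm B}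
      (nuclearNorm X) := by
  constructor
  · obtain ⟨A, B, hAB, hnorm⟩ := exists_mul_eq_and_frobNorm_mul_frobNorm_eq_nuclearNorm X
    exact ⟨p, A, B, hAB, hnorm.symm⟩
  · rintro c ⟨k, A, B, hAB, rfl⟩
    exact nuclearNorm_le_frobNorm_mul_frobNorm X hAB
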